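/- arXiv:1301.0848 — 10 statements merged into one kernel-verified Lean document; each statement's English description precedes it below -/
import Mathlib

section
/- Let A be an m×m integer matrix with det A = 1 or det A = -1, let B be an l×l integer matrix with det B = 1 or det B = -1, and suppose 1 ≤ m < l. If P is an m×l integer matrix and k is an integer with Pᵀ A P = k·B, then k = 0. (This is the algebraic content of the statement: if M and N are closed connected oriented 2n-manifolds with 1 ≤ rank H̄ⁿ(M;ℤ) < rank H̄ⁿ(N;ℤ), then there is no non-zero degree map from M to N.) -/
open Matrix

theorem Matrix.det_mul_eq_zero_of_card_lt {m n R : Type*} [Fintype m] [Fintype n] [DecidableEq n]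
    [CommRing R] [IsDomain R] (M : Matrix n m R) (N : Matrix m n R)
    (h : Fintype.card m < Fintype.card n) : (M * N).det = 0 := by
  by_contra hdet
  have hrank_le : (M * N).rank ≤ Fintype.card m :=
    (rank_mul_le_right M N).trans (rank_le_card_height N)
  rw [rank_of_det_ne_zero hdet] at hrank_le
  omega

theorem no_nonzero_degree_of_rank_lt_general {m l : ℕ} (hml : m < l)
    (A : Matrix (Fin m) (Fin m) ℤ)
    (B : Matrix (Fin l) (Fin l) ℤ) (hB : B.det = 1 ∨ B.det = -1)
    (P : Matrix (Fin m) (Fin l) ℤ) (k : ℤ)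
    (h : Pᵀ * A * P = k • B) : k = 0 := by
  have hdetB : B.det ≠ 0 := by rcases hB with hB | hB <;> simp [hB]
  have hdet : (k • B).det = 0 := by
    rw [← h]
    exact det_mul_eq_zero_of_card_lt (Pᵀ * A) P (by simpa using hml)
  rw [det_smul, Fintype.card_fin] at hdet
  exact eq_zero_of_pow_eq_zero ((mul_eq_zero.mp hdet).resolve_right hdetB)

theorem no_nonzero_degree_of_rank_lt {m l : ℕ} (hm : 1 ≤ m) (hml : m < l)
    (A : Matrix (Fin m) (Fin m) ℤ) (hA : A.det = 1 ∨ A.det = -1)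
    (B : Matrix (Fin l) (Fin l) ℤ) (hB : B.det = 1 ∨ B.det = -1)
    (P : Matrix (Fin m) (Fin l) ℤ) (k : ℤ)
    (h : Pᵀ * A * P = k • B) : k = 0 :=
  no_nonzero_degree_of_rank_lt_general hml A B hB P k h
end

section
/- Let r be a natural number, let A and B be unimodular integer matrices of size (2r+1)×(2r+1), let P be a (2r+1)×(2r+1) integer matrix and k an integer such that Pᵀ A P = k·B. Then |k| is a perfect square, i.e., there exists an integer m with |k| = m². (This is the algebraic content of: if M and L are closed oriented 2n-manifolds with rank H̄ⁿ(M;ℤ) = rank H̄ⁿ(L;ℤ) = 2r+1, then the absolute value of the degree of any map f: M → L is the square of an integer.) -/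
/-!
Taking determinants in `Pᵀ A P = k B` and using `|det A| = |det B| = 1` gives
`|det P|² = |k|^(2r+1)`. A nonnegative integer whose odd power is a square is itself a square,
since `2` and the odd exponent are coprime.
-/

open Matrix

theorem Matrix.det_sq_mul_det_of_transpose_mul_mul_eq_smul {n R : Type*} [Fintype n]
    [DecidableEq n] [CommRing R] {A B P : Matrix n n R} {k : R} (h : Pᵀ * A * P = k • B) :
    P.det ^ 2 * A.det = k ^ Fintype.card n * B.det := by
  have hdet := congrArg det h
  rw [det_mul, det_mul, det_transpose, det_smul] at hdet
  linear_combination hdet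

theorem Int.isSquare_of_sq_eq_pow_of_odd {k m : ℤ} {n : ℕ} (hn : Odd n) (h : m ^ 2 = k ^ n) :
    IsSquare k := by
  have hcop : Nat.Coprime n 2 := Nat.coprime_two_right.mpr hn
  obtain ⟨c, hc, -⟩ := (pow_eq_pow_iff_of_coprime hcop).mp (by exact_mod_cast h.symm :
    (k : ℚ) ^ n = (m : ℚ) ^ 2)
  exact Rat.isSquare_intCast_iff.mp ⟨c, by rw [hc, sq]⟩

theorem abs_degree_is_square_of_odd_rank {r : ℕ}
    (A B P : Matrix (Fin (2 * r + 1)) (Fin (2 * r + 1)) ℤ)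
    (hA : A.det = 1 ∨ A.det = -1) (hB : B.det = 1 ∨ B.det = -1)
    (k : ℤ) (h : Pᵀ * A * P = k • B) : ∃ m : ℤ, |k| = m ^ 2 := by
  have hdet := congrArg abs (det_sq_mul_det_of_transpose_mul_mul_eq_smul h)
  rw [abs_mul, abs_mul, abs_pow, abs_pow, (abs_eq zero_le_one).mpr hA,
    (abs_eq zero_le_one).mpr hB, mul_one, mul_one, Fintype.card_fin] at hdet
  obtain ⟨m, hm⟩ := Int.isSquare_of_sq_eq_pow_of_odd (odd_two_mul_add_one r) hdet
  exact ⟨m, by rw [hm, sq]⟩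
end

section
/- Let n ≥ 1 and k an integer. There exists a (4n)×(4n) integer matrix P with Pᵀ P = k·I_{4n} if and only if k ≥ 0. (This is the algebraic content of: there is a degree k map f: (ℂP²)^{♯4n} → (ℂP²)^{♯4n} if and only if k is a nonnegative integer.) -/
/-!
If `Pᵀ P = k • 1` then `k` is a diagonal entry of `Pᵀ P`, a sum of squares, so `k ≥ 0`.
Conversely, write `k = a² + b² + c² + d²` (Lagrange); the matrix of right multiplication by the
quaternion `a + bi + cj + dk` satisfies `Qᵀ Q = k • 1` in size 4, and `n` diagonal copies of it
give the required matrix of size `4n`.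
-/

open Matrix

namespace Matrix

variable {ι m o R : Type*}

theorem transpose_mul_self_apply_self_nonneg [Fintype ι] [Ring R] [LinearOrder R]
    [IsOrderedRing R] (P : Matrix ι ι R) (i : ι) : 0 ≤ (Pᵀ * P) i i := by
  simpa only [mul_apply, transpose_apply] using
    Finset.sum_nonneg fun j _ => mul_self_nonneg (P j i)

theorem nonneg_of_transpose_mul_self_eq_smul_one [Fintype ι] [DecidableEq ι] [Nonempty ι]
    [Ring R] [LinearOrder R] [IsOrderedRing R] {P : Matrix ι ι R} {k : R}
    (h : Pᵀ * P = k • 1) : 0 ≤ k := by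
  obtain ⟨i⟩ := ‹Nonempty ι›
  simpa [h] using P.transpose_mul_self_apply_self_nonneg i

theorem reindex_transpose_mul_self_eq_smul_one [Fintype ι] [Fintype m] [DecidableEq ι]
    [DecidableEq m] [Semiring R] {P : Matrix ι ι R} {k : R} (h : Pᵀ * P = k • 1) (e : ι ≃ m) :
    (reindex e e P)ᵀ * reindex e e P = k • 1 := by
  rw [transpose_reindex, reindex_apply, reindex_apply, submatrix_mul_equiv, h, submatrix_smul,
    Pi.smul_apply, Pi.smul_apply, submatrix_one_equiv]

theorem blockDiagonal_transpose_mul_self_eq_smul_one [Fintype m] [Fintype o] [DecidableEq m]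
    [DecidableEq o] [Semiring R] {Q : Matrix m m R} {k : R} (h : Qᵀ * Q = k • 1) :
    (blockDiagonal fun _ : o => Q)ᵀ * blockDiagonal (fun _ : o => Q) = k • 1 := by
  rw [blockDiagonal_transpose, ← blockDiagonal_mul, h, ← blockDiagonal_one, ← blockDiagonal_smul]
  rfl

/-- Row `r` holds the coordinates of `eᵣ * (a + b i + c j + d k)` in the basis `1, i, j, k` of the
quaternions, so `Qᵀ Q = (a² + b² + c² + d²) • 1` expresses that right multiplication scales the
norm. -/
def quaternionRightMul [Neg R] (a b c d : R) : Matrix (Fin 4) (Fin 4) R :=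
  !![a, b, c, d; -b, a, -d, c; -c, d, a, -b; -d, -c, b, a]

theorem quaternionRightMul_transpose_mul_self [CommRing R] (a b c d : R) :
    (quaternionRightMul a b c d)ᵀ * quaternionRightMul a b c d =
      (a ^ 2 + b ^ 2 + c ^ 2 + d ^ 2) • 1 := by
  ext i j
  fin_cases i <;> fin_cases j <;>
    simp [quaternionRightMul, mul_apply, Fin.sum_univ_four] <;> ring

end Matrix

theorem Int.exists_transpose_mul_self_eq_smul_one_fin_four {k : ℤ} (hk : 0 ≤ k) :
    ∃ Q : Matrix (Fin 4) (Fin 4) ℤ, Qᵀ * Q = k • 1 := by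
  obtain ⟨a, b, c, d, hsum⟩ := Nat.sum_four_squares k.toNat
  refine ⟨quaternionRightMul (a : ℤ) b c d, ?_⟩
  rw [quaternionRightMul_transpose_mul_self, ← Int.toNat_of_nonneg hk, ← hsum]
  push_cast
  rfl

theorem degree_cp2_four_n_connected_sum {n : ℕ} (hn : 1 ≤ n) (k : ℤ) :
    (∃ P : Matrix (Fin (4 * n)) (Fin (4 * n)) ℤ,
        Pᵀ * P = k • (1 : Matrix (Fin (4 * n)) (Fin (4 * n)) ℤ)) ↔ 0 ≤ k := by
  refine ⟨fun ⟨P, hP⟩ => ?_, fun hk => ?_⟩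
  · have : Nonempty (Fin (4 * n)) := ⟨⟨0, by omega⟩⟩
    exact nonneg_of_transpose_mul_self_eq_smul_one hP
  · obtain ⟨Q, hQ⟩ := Int.exists_transpose_mul_self_eq_smul_one_fin_four hk
    exact ⟨_, reindex_transpose_mul_self_eq_smul_one
      (blockDiagonal_transpose_mul_self_eq_smul_one (o := Fin n) hQ) finProdFinEquiv⟩
end

section
/- For an integer k, there exists a 3×2 integer matrix P with Pᵀ P = k·I₂ if and only if k is expressible as a sum of two squares of integers, i.e., there exist integers m, n with k = m² + n². (This is the algebraic content of: there is a degree k map f: (ℂP²)^{♯3} → ℂP²♯ℂP² if and only if k ≥ 0 and every prime of the form 4p-1 dividing k occurs to an even power in the prime factorization of k.) -/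
/-! The rows of `P` give Gaussian integers `zᵣ = P r 0 + P r 1 * i` with `z₀² + z₁² + z₂² = 0` and
`N z₀ + N z₁ + N z₂ = 2k`. Since `(z₀ + i z₁)(z₀ - i z₁) = (i z₂)²`, unique factorization in `ℤ[i]`
makes `z₀ ± i z₁` associated to `g s²` and `g t²`, so `4k = N g (N s + N t)²` is a norm, i.e. a sum
of two squares; halving twice gives `k`. Conversely, `(m, n, 0)` and `(-n, m, 0)` are orthogonal of
squared length `m² + n²`. -/

open Matrix

namespace UniqueFactorizationMonoid

theorem exists_associated_mul_sq_of_mul_eq_sq {R : Type*} [CommMonoidWithZero R]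
    [UniqueFactorizationMonoid R] {x y c : R} (h : x * y = c ^ 2) :
    ∃ g s t : R, Associated (g * s ^ 2) x ∧ Associated (g * t ^ 2) y := by
  let := toGCDMonoid R
  obtain ⟨α, β, hx, hy, hαβ⟩ := extract_gcd x y
  set g := gcd x y
  by_cases hg : g = 0
  · exact ⟨0, 0, 0, by simp [hx, hg], by simp [hy, hg]⟩
  have hxy : x * y = g ^ 2 * (α * β) := by rw [hx, hy, mul_mul_mul_comm, sq]
  obtain ⟨w, rfl⟩ : g ∣ c := by
    rw [← pow_dvd_pow_iff_dvd two_ne_zero, ← h, hxy]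
    exact dvd_mul_right _ _
  have hw : α * β = w ^ 2 := mul_left_cancel₀ (pow_ne_zero 2 hg) (by rw [← mul_pow, ← h, hxy])
  obtain ⟨s, hs⟩ := exists_associated_pow_of_mul_eq_pow hαβ hw
  obtain ⟨t, ht⟩ := exists_associated_pow_of_mul_eq_pow ((gcd_comm' α β).isUnit_iff.mp hαβ)
    ((mul_comm β α).trans hw)
  exact ⟨g, s, t, hx ▸ hs.mul_left g, hy ▸ ht.mul_left g⟩

end UniqueFactorizationMonoid

namespace Zsqrtd

theorem norm_add_add_norm_sub {d : ℤ} (a b : ℤ√d) :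
    (a + b).norm + (a - b).norm = 2 * (a.norm + b.norm) := by
  simp only [norm_def, re_add, im_add, re_sub, im_sub]
  ring

end Zsqrtd

namespace GaussianInt

theorem norm_eq_sq_add_sq (z : GaussianInt) : z.norm = z.re ^ 2 + z.im ^ 2 := by
  rw [Zsqrtd.norm_def]
  ring

theorem exists_norm_add_norm_add_two_mul_norm_eq_norm_of_mul_eq_sq {x y c : GaussianInt}
    (h : x * y = c ^ 2) :
    ∃ z : GaussianInt, x.norm + y.norm + 2 * c.norm = z.norm := by
  obtain ⟨g, s, t, hx, hy⟩ := UniqueFactorizationMonoid.exists_associated_mul_sq_of_mul_eq_sq h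
  have hnorm {a b : GaussianInt} (hab : Associated a b) : a.norm = b.norm :=
    Zsqrtd.norm_eq_of_associated (by norm_num) hab
  have hxN : x.norm = g.norm * s.norm ^ 2 := by
    rw [← hnorm hx, Zsqrtd.norm_mul, sq, sq, Zsqrtd.norm_mul]
  have hyN : y.norm = g.norm * t.norm ^ 2 := by
    rw [← hnorm hy, Zsqrtd.norm_mul, sq, sq, Zsqrtd.norm_mul]
  have hcN : c.norm = g.norm * s.norm * t.norm := by
    refine (pow_left_inj₀ (norm_nonneg c) ?_ two_ne_zero).mp ?_
    · exact mul_nonneg (mul_nonneg (norm_nonneg g) (norm_nonneg s)) (norm_nonneg t)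
    · rw [sq, ← Zsqrtd.norm_mul, ← sq, ← h, Zsqrtd.norm_mul, hxN, hyN]
      ring
  refine ⟨g * (s.norm + t.norm : ℤ), ?_⟩
  rw [Zsqrtd.norm_mul, Zsqrtd.norm_intCast, hxN, hyN, hcN]
  ring

theorem exists_two_mul_sum_norm_eq_norm_of_sq_add_sq_add_sq_eq_zero {z₀ z₁ z₂ : GaussianInt}
    (h : z₀ ^ 2 + z₁ ^ 2 + z₂ ^ 2 = 0) :
    ∃ z : GaussianInt, 2 * (z₀.norm + z₁.norm + z₂.norm) = z.norm := by
  let i : GaussianInt := Zsqrtd.sqrtd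
  have hi : i ^ 2 = -1 := by rw [sq, Zsqrtd.dmuld]; rfl
  have hiN : i.norm = 1 := rfl
  obtain ⟨z, hz⟩ := exists_norm_add_norm_add_two_mul_norm_eq_norm_of_mul_eq_sq
    (x := z₀ + i * z₁) (y := z₀ - i * z₁) (c := i * z₂)
    (by linear_combination h - (z₁ ^ 2 + z₂ ^ 2) * hi)
  refine ⟨z, ?_⟩
  rw [← hz, Zsqrtd.norm_add_add_norm_sub, Zsqrtd.norm_mul, Zsqrtd.norm_mul, hiN]
  ring

end GaussianInt

theorem degree_cp2_three_to_two (k : ℤ) :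
    (∃ P : Matrix (Fin 3) (Fin 2) ℤ, Pᵀ * P = k • (1 : Matrix (Fin 2) (Fin 2) ℤ)) ↔
      ∃ m n : ℤ, k = m ^ 2 + n ^ 2 := by
  constructor
  · rintro ⟨P, hP⟩
    have h00 : P 0 0 * P 0 0 + P 1 0 * P 1 0 + P 2 0 * P 2 0 = k := by
      simpa [mul_apply, Fin.sum_univ_three] using congr_fun₂ hP 0 0
    have h01 : P 0 0 * P 0 1 + P 1 0 * P 1 1 + P 2 0 * P 2 1 = 0 := by
      simpa [mul_apply, Fin.sum_univ_three] using congr_fun₂ hP 0 1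
    have h11 : P 0 1 * P 0 1 + P 1 1 * P 1 1 + P 2 1 * P 2 1 = k := by
      simpa [mul_apply, Fin.sum_univ_three] using congr_fun₂ hP 1 1
    let z (r : Fin 3) : GaussianInt := ⟨P r 0, P r 1⟩
    have hsq : z 0 ^ 2 + z 1 ^ 2 + z 2 ^ 2 = 0 := by
      ext <;> simp only [z, sq, Zsqrtd.re_add, Zsqrtd.im_add, Zsqrtd.re_mul, Zsqrtd.im_mul,
        Zsqrtd.re_zero, Zsqrtd.im_zero]
      · linear_combination h00 - h11
      · linear_combination 2 * h01
    have hnorm : (z 0).norm + (z 1).norm + (z 2).norm = 2 * k := by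
      simp only [z, GaussianInt.norm_eq_sq_add_sq]
      linear_combination h00 + h11
    obtain ⟨w, hw⟩ := GaussianInt.exists_two_mul_sum_norm_eq_norm_of_sq_add_sq_add_sq_eq_zero hsq
    rw [hnorm, GaussianInt.norm_eq_sq_add_sq] at hw
    exact ⟨_, _, Int.sq_add_sq_of_two_mul_sq_add_sq (Int.sq_add_sq_of_two_mul_sq_add_sq hw)⟩
  · rintro ⟨m, n, rfl⟩
    refine ⟨!![m, -n; n, m; 0, 0], ?_⟩
    ext i j
    fin_cases i <;> fin_cases j <;>
      simp [mul_apply, Fin.sum_univ_three] <;> ring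
end

section
/- For an integer k, there exist integers a, b, c, d, e, f, g, h satisfying a² + c² + 2·e·g = k, b² + d² + 2·f·h = k, and a·b + c·d + e·h + f·g = 0, if and only if k is expressible as a sum of two squares of integers, i.e., there exist integers m, n with k = m² + n². (This is the algebraic content of: there is a degree k map f: (ℂP²)^{♯2}♯(S²×S²) → ℂP²♯ℂP² if and only if k ≥ 0 and every prime of the form 4p-1 dividing k occurs to an even power in the prime factorization of k. The system is Pᵀ·diag(1,1,H)·P = k·I₂ for the 4×2 matrix P with rows (a,b), (c,d), (e,f), (g,h).) -/
open EuclideanDomain in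
lemma gauss_rank_one (m11 m12 m21 m22 : GaussianInt) (hdet : m11 * m22 = m12 * m21) :
    ∃ c₁ c₂ r₁ r₂ : GaussianInt,
      m11 = c₁ * r₁ ∧ m12 = c₁ * r₂ ∧ m21 = c₂ * r₁ ∧ m22 = c₂ * r₂ := by
  by_cases h0 : m11 = 0 ∧ m12 = 0
  · exact ⟨0, 1, m21, m22, by simp [h0.1], by simp [h0.2], by ring, by ring⟩
  · have hg : gcd m11 m12 ≠ 0 := by
      rw [Ne, EuclideanDomain.gcd_eq_zero_iff]
      exact h0
    obtain ⟨u, hu⟩ := EuclideanDomain.gcd_dvd_left m11 m12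
    obtain ⟨v, hv⟩ := EuclideanDomain.gcd_dvd_right m11 m12
    have hbez := EuclideanDomain.gcd_eq_gcd_ab m11 m12
    have hcop : IsCoprime u v := by
      refine ⟨gcdA m11 m12, gcdB m11 m12, ?_⟩
      refine mul_left_cancel₀ hg ?_
      linear_combination (-(gcdA m11 m12)) * hu - (gcdB m11 m12) * hv - hbez
    have huv : u * m22 = v * m21 :=
      mul_left_cancel₀ hg (by linear_combination hdet - m22 * hu + m21 * hv)
    by_cases hu0 : u = 0
    · have hv0 : v ≠ 0 := by
        rintro rfl
        rw [hu0] at hcop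
        exact not_isCoprime_zero_zero hcop
      have hm21 : m21 = 0 := by
        have h5 : v * m21 = 0 := by rw [← huv, hu0, zero_mul]
        exact (mul_eq_zero.mp h5).resolve_left hv0
      exact ⟨m12, m22, 0, 1, by rw [hu, hu0]; ring, by rw [mul_one], by rw [hm21, mul_zero],
        by rw [mul_one]⟩
    · have hdvd : u ∣ m21 := by
        refine hcop.dvd_of_dvd_mul_left ⟨m22, ?_⟩
        rw [← huv]
      obtain ⟨s, hs⟩ := hdvd
      have hm22 : m22 = s * v := by
        apply mul_left_cancel₀ hu0
        rw [huv, hs]; ring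
      exact ⟨gcd m11 m12, s, u, v, hu, hv, by rw [hs, mul_comm], hm22⟩

lemma gauss_norm_re (z : GaussianInt) : (z * star z).re = z.re ^ 2 + z.im ^ 2 := by
  simp [Zsqrtd.re_mul, Zsqrtd.re_star, Zsqrtd.im_star]
  ring

theorem degree_cp2_two_s2s2_to_cp2_two (k : ℤ) :
    (∃ a b c d e f g h : ℤ,
        a ^ 2 + c ^ 2 + 2 * e * g = k ∧
        b ^ 2 + d ^ 2 + 2 * f * h = k ∧
        a * b + c * d + e * h + f * g = 0) ↔
      ∃ m n : ℤ, k = m ^ 2 + n ^ 2 := by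
  constructor
  · rintro ⟨a, b, c, d, e, f, g, h, h1, h2, h3⟩
    set m11 : GaussianInt := ⟨c + g - e + a, d + h - f + b⟩ with hm11def
    set m12 : GaussianInt := ⟨c + g - (d - f), (c - e) + (d + h)⟩ with hm12def
    set m21 : GaussianInt := ⟨c + g + (d - f), (d + h) - (c - e)⟩ with hm21def
    set m22 : GaussianInt := ⟨c + g - e - a, d + h - f - b⟩ with hm22def
    have hdet : m11 * m22 = m12 * m21 := by
      refine Zsqrtd.ext ?_ ?_
      · simp only [hm11def, hm12def, hm21def, hm22def, Zsqrtd.re_mul]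
        linear_combination h2 - h1
      · simp only [hm11def, hm12def, hm21def, hm22def, Zsqrtd.im_mul]
        linear_combination (-2 : ℤ) * h3
    obtain ⟨c₁, c₂, r₁, r₂, e11, e12, e21, e22⟩ := gauss_rank_one m11 m12 m21 m22 hdet
    set Z : GaussianInt := c₁ * star r₂ - c₂ * star r₁ with hZ
    have key : Z * star Z =
        m12 * star m12 + m21 * star m21 - m11 * star m22 - star m11 * m22 := by
      rw [hZ, e11, e12, e21, e22]
      simp only [star_mul, star_sub, star_star]
      ring
    have hre := congrArg Zsqrtd.re key
    rw [gauss_norm_re] at hre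
    simp only [hm11def, hm12def, hm21def, hm22def, Zsqrtd.re_add, Zsqrtd.re_sub,
      Zsqrtd.re_mul, Zsqrtd.im_mul, Zsqrtd.re_star, Zsqrtd.im_star] at hre
    set p := Z.re with hp
    set q := Z.im with hq
    have h4k : p ^ 2 + q ^ 2 = 4 * k := by linear_combination hre + 2 * h1 + 2 * h2
    rcases Int.even_or_odd p with ⟨s, hs⟩ | ⟨s, hs⟩ <;>
      rcases Int.even_or_odd q with ⟨t, ht⟩ | ⟨t, ht⟩
    · refine ⟨s, t, ?_⟩
      have h4 : 4 * (s ^ 2 + t ^ 2) = 4 * k := by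
        rw [hs, ht] at h4k
        linear_combination h4k
      linarith
    · exfalso
      rw [hs, ht] at h4k
      have hd : (4 : ℤ) ∣ 1 := ⟨k - s ^ 2 - t ^ 2 - t, by linear_combination h4k⟩
      norm_num at hd
    · exfalso
      rw [hs, ht] at h4k
      have hd : (4 : ℤ) ∣ 1 := ⟨k - s ^ 2 - s - t ^ 2, by linear_combination h4k⟩
      norm_num at hd
    · exfalso
      rw [hs, ht] at h4k
      have hd : (4 : ℤ) ∣ 2 := ⟨k - s ^ 2 - s - t ^ 2 - t, by linear_combination h4k⟩
      norm_num at hd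
  · rintro ⟨m, n, hk⟩
    exact ⟨m, -n, n, m, 0, 0, 0, 0, by linear_combination -hk, by linear_combination -hk,
      by ring⟩
end

section
/- For an integer k, there exists a 3×2 integer matrix P with Pᵀ·diag(1,1,-1)·P = k·I₂ if and only if k is expressible as a sum of two squares of integers, i.e., there exist integers m, n with k = m² + n². (This is the algebraic content of: there is a degree k map f: (ℂP²)^{♯2}♯(ℂP²-bar) → ℂP²♯ℂP² if and only if k ≥ 0 and every prime of the form 4p-1 dividing k occurs to an even power in the prime factorization of k.) -/
/-!
The columns `u = (a, b, c)` and `v = (d, e, f)` of `P` are orthogonal for the form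
`x² + y² - z²` and both have norm `k`. Eliminating the last coordinates gives
`(c² + f²) k = (f a - c d)² + (f b - c e)²`. If `c = f = 0` then `k = a² + b²` directly;
otherwise `k` is the quotient of a sum of two squares by a nonzero sum of two squares, hence
itself a sum of two squares by the criterion on the exponents of the primes `≡ 3 (mod 4)`.
Conversely `k = m² + n²` is realised by the columns `(m, n, 0)` and `(-n, m, 0)`.
-/

open Matrix

theorem Nat.eq_sq_add_sq_iff_forall_prime {n : ℕ} :
    (∃ x y, n = x ^ 2 + y ^ 2) ↔
      ∀ q, q.Prime → q % 4 = 3 → Even (padicValNat q n) := by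
  rw [Nat.eq_sq_add_sq_iff]
  refine ⟨fun h q hq h3 => ?_, fun h q hq => h q (Nat.prime_of_mem_primeFactors hq)⟩
  by_cases hmem : q ∈ n.primeFactors
  · exact h q hmem h3
  · rw [padicValNat.eq_zero_iff.mpr]
    · exact Even.zero
    · rw [Nat.mem_primeFactors] at hmem
      tauto

theorem Nat.exists_sq_add_sq_of_mul {s k : ℕ} (hs : s ≠ 0) (hs_sum : ∃ x y, s = x ^ 2 + y ^ 2)
    (h : ∃ x y, s * k = x ^ 2 + y ^ 2) : ∃ x y, k = x ^ 2 + y ^ 2 := by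
  rcases eq_or_ne k 0 with rfl | hk
  · exact ⟨0, 0, rfl⟩
  rw [Nat.eq_sq_add_sq_iff_forall_prime] at hs_sum h ⊢
  intro q hq h3
  have : Fact q.Prime := ⟨hq⟩
  have hsk := h q hq h3
  rw [padicValNat.mul hs hk] at hsk
  exact (Nat.even_add.mp hsk).mp (hs_sum q hq h3)

theorem Int.exists_sq_add_sq_of_mul {s k : ℤ} (hs : 0 < s) (hs_sum : ∃ x y, s = x ^ 2 + y ^ 2)
    (h : ∃ x y, s * k = x ^ 2 + y ^ 2) : ∃ x y, k = x ^ 2 + y ^ 2 := by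
  obtain ⟨X, Y, hXY⟩ := h
  obtain ⟨c, f, hcf⟩ := hs_sum
  have hk : 0 ≤ k := nonneg_of_mul_nonneg_right (hXY ▸ by positivity) hs
  lift k to ℕ using hk
  lift s to ℕ using hs.le
  obtain ⟨x, y, hxy⟩ := Nat.exists_sq_add_sq_of_mul (s := s) (k := k) (by omega)
    ⟨c.natAbs, f.natAbs, by zify; simpa [sq_abs] using hcf⟩
    ⟨X.natAbs, Y.natAbs, by zify; simpa [sq_abs] using hXY⟩
  exact ⟨x, y, by exact_mod_cast hxy⟩

theorem Matrix.transpose_mul_lorentz_mul_apply {R : Type*} [CommRing R] {n : Type*}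
    (P : Matrix (Fin 3) n R) (i j : n) :
    (Pᵀ * !![(1 : R), 0, 0; 0, 1, 0; 0, 0, -1] * P) i j
      = P 0 i * P 0 j + P 1 i * P 1 j - P 2 i * P 2 j := by
  simp [Matrix.mul_apply, Fin.sum_univ_succ, sub_eq_add_neg, add_assoc]

theorem sq_add_sq_mul_eq_of_lorentz {R : Type*} [CommRing R] {a b c d e f k : R}
    (hu : a * a + b * b - c * c = k) (hv : d * d + e * e - f * f = k)
    (huv : a * d + b * e - c * f = 0) :
    (c ^ 2 + f ^ 2) * k = (f * a - c * d) ^ 2 + (f * b - c * e) ^ 2 := by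
  linear_combination (-(f ^ 2)) * hu - c ^ 2 * hv + 2 * c * f * huv

theorem degree_cp2_two_cp2bar_to_cp2_two (k : ℤ) :
    (∃ P : Matrix (Fin 3) (Fin 2) ℤ,
        Pᵀ * !![(1 : ℤ), 0, 0; 0, 1, 0; 0, 0, -1] * P
          = k • (1 : Matrix (Fin 2) (Fin 2) ℤ)) ↔
      ∃ m n : ℤ, k = m ^ 2 + n ^ 2 := by
  constructor
  · rintro ⟨P, hP⟩
    have entry (i j : Fin 2) := congrFun (congrFun hP i) j
    simp only [transpose_mul_lorentz_mul_apply] at entry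
    have hu : P 0 0 * P 0 0 + P 1 0 * P 1 0 - P 2 0 * P 2 0 = k := by simpa using entry 0 0
    have hv : P 0 1 * P 0 1 + P 1 1 * P 1 1 - P 2 1 * P 2 1 = k := by simpa using entry 1 1
    have huv : P 0 0 * P 0 1 + P 1 0 * P 1 1 - P 2 0 * P 2 1 = 0 := by simpa using entry 0 1
    by_cases hcf : P 2 0 = 0 ∧ P 2 1 = 0
    · exact ⟨P 0 0, P 1 0, by rw [← hu, hcf.1]; ring⟩
    · refine Int.exists_sq_add_sq_of_mul ?_ ⟨_, _, rfl⟩ ⟨_, _, sq_add_sq_mul_eq_of_lorentz hu hv huv⟩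
      rcases not_and_or.mp hcf with h | h <;> positivity
  · rintro ⟨m, n, rfl⟩
    refine ⟨!![m, -n; n, m; 0, 0], ?_⟩
    ext i j
    fin_cases i <;> fin_cases j <;> simp [transpose_mul_lorentz_mul_apply, sq, mul_comm, add_comm]
end

section
/- Let n ≥ 4 and k an integer. There exists an (n+1)×2 integer matrix P with Pᵀ·diag(Iₙ, -1)·P = k·I₂ if and only if k ≥ 0, where diag(Iₙ, -1) is the diagonal matrix with n diagonal entries 1 followed by one entry -1. (This is the algebraic content of: there is a degree k map f: (ℂP²)^{♯n}♯(ℂP²-bar) → ℂP²♯ℂP², n ≥ 4, if and only if k ≥ 0.) -/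
open Matrix

/-!
If `k < 0`, the columns of `P` would span a plane on which the form `D = diag(1, …, 1, -1)` is
negative definite. But some nonzero combination `P x` of the two columns has vanishing last
coordinate, and there `D` is a sum of squares: `0 ≤ (P x)ᵀ D (P x) = k ‖x‖²`.
Conversely, Lagrange's four-square theorem writes `k = a² + b² + c² + e²`, and the vectors
`(a, b, c, e)` and `(-b, a, e, -c)` are orthogonal of square length `k`; placed in four of the
`n ≥ 4` positive coordinates they form the columns of `P`.
-/
section Signature

variable {R ι κ : Type*} [CommRing R] [LinearOrder R] [IsStrictOrderedRing R] [Fintype ι]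
  [DecidableEq ι] [Fintype κ] [DecidableEq κ]

lemma dotProduct_diagonal_mulVec_self_nonneg {d : ι → R} {i₀ : ι} (hd : ∀ i ≠ i₀, 0 ≤ d i)
    {w : ι → R} (hw : w i₀ = 0) : 0 ≤ w ⬝ᵥ (diagonal d *ᵥ w) := by
  refine Finset.sum_nonneg fun i _ => ?_
  rw [mulVec_diagonal]
  by_cases hi : i = i₀
  · simp [hi, hw]
  · nlinarith [hd i hi, mul_self_nonneg (w i)]

theorem nonneg_of_transpose_mul_diagonal_mul_eq_smul_one [Nontrivial κ] {d : ι → R} {i₀ : ι}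
    (hd : ∀ i ≠ i₀, 0 ≤ d i) {P : Matrix ι κ R} {k : R}
    (hP : Pᵀ * diagonal d * P = k • 1) : 0 ≤ k := by
  obtain ⟨x, hx, hPx⟩ := exists_ne_zero_dotProduct_eq_zero (P i₀)
  have hform : (P *ᵥ x) ⬝ᵥ (diagonal d *ᵥ (P *ᵥ x)) = k * (x ⬝ᵥ x) :=
    calc (P *ᵥ x) ⬝ᵥ (diagonal d *ᵥ (P *ᵥ x))
        = x ⬝ᵥ ((Pᵀ * diagonal d * P) *ᵥ x) := by
          rw [Matrix.mul_assoc, ← mulVec_mulVec, dotProduct_mulVec x, vecMul_transpose,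
            mulVec_mulVec]
      _ = k * (x ⬝ᵥ x) := by rw [hP, smul_mulVec, one_mulVec, dotProduct_smul, smul_eq_mul]
  have hx_pos : 0 < x ⬝ᵥ x :=
    (Finset.sum_nonneg fun i _ => mul_self_nonneg (x i)).lt_of_ne'
      (dotProduct_self_eq_zero.not.mpr hx)
  refine nonneg_of_mul_nonneg_left ?_ hx_pos
  rw [← hform]
  exact dotProduct_diagonal_mulVec_self_nonneg hd (by rwa [mulVec, dotProduct_comm])

end Signature

lemma transpose_mul_diagonal_mul_submatrix_one_mul {R ι κ m : Type*} [CommSemiring R]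
    [Fintype ι] [Fintype κ] [DecidableEq ι] [DecidableEq κ] {e : κ → ι}
    (he : Function.Injective e) {d : ι → R} (hd : ∀ j, d (e j) = 1) (Q : Matrix κ m R) :
    ((1 : Matrix ι ι R).submatrix id e * Q)ᵀ * diagonal d * ((1 : Matrix ι ι R).submatrix id e * Q)
      = Qᵀ * Q := by
  let E := (1 : Matrix ι ι R).submatrix id e
  have hE : Eᵀ * diagonal d * E = 1 := by
    simp only [E, transpose_submatrix, transpose_one, Matrix.mul_assoc, ← Equiv.coe_refl]
    rw [mul_submatrix_one, one_submatrix_mul]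
    simp [submatrix_diagonal _ _ he, Function.comp_def, hd]
  rw [transpose_mul, show Qᵀ * Eᵀ * diagonal d * (E * Q) = Qᵀ * (Eᵀ * diagonal d * E) * Q by
    simp only [Matrix.mul_assoc], hE, Matrix.mul_one]

lemma exists_transpose_mul_self_eq_smul_one {k : ℤ} (hk : 0 ≤ k) :
    ∃ Q : Matrix (Fin 4) (Fin 2) ℤ, Qᵀ * Q = k • 1 := by
  obtain ⟨a, b, c, e, habce⟩ := Nat.sum_four_squares k.toNat
  have hk' : (a : ℤ) ^ 2 + b ^ 2 + c ^ 2 + e ^ 2 = k := by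
    rw [← Int.toNat_of_nonneg hk, ← habce]; push_cast; ring
  refine ⟨!![(a : ℤ), -b; b, a; c, e; e, -c], ?_⟩
  ext i j
  subst hk'
  fin_cases i <;> fin_cases j <;> simp [mul_apply, Fin.sum_univ_four] <;> ring

theorem degree_cp2_n_cp2bar_to_cp2_two {n : ℕ} (hn : 4 ≤ n) (k : ℤ) :
    (∃ P : Matrix (Fin (n + 1)) (Fin 2) ℤ,
        Pᵀ * Matrix.diagonal (fun i : Fin (n + 1) => if (i : ℕ) < n then (1 : ℤ) else -1) * P
          = k • (1 : Matrix (Fin 2) (Fin 2) ℤ)) ↔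
      0 ≤ k := by
  refine ⟨fun ⟨P, hP⟩ => nonneg_of_transpose_mul_diagonal_mul_eq_smul_one (i₀ := Fin.last n)
    (fun i hi => ?_) hP, fun hk => ?_⟩
  · simp [Fin.val_lt_last hi]
  · obtain ⟨Q, hQ⟩ := exists_transpose_mul_self_eq_smul_one hk
    have hle : 4 ≤ n + 1 := by omega
    refine ⟨(1 : Matrix _ _ ℤ).submatrix id (Fin.castLE hle) * Q, ?_⟩
    rw [transpose_mul_diagonal_mul_submatrix_one_mul (Fin.castLE_injective hle), hQ]
    exact fun j => if_pos (by simp only [Fin.val_castLE]; omega)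
end

section
/- For every integer k there exist integers a, b, c, d, e, f satisfying a² + c² - e² = k, f² - b² - d² = k, and a·b + c·d - e·f = 0. Equivalently, for every integer k there is a 3×2 integer matrix P with Pᵀ·diag(1,1,-1)·P = k·diag(1,-1). (This is the algebraic content of: for every integer k there is a degree k map f: (ℂP²)^{♯2}♯(ℂP²-bar) → ℂP²♯(ℂP²-bar); for k ≡ 2 (mod 4), which is not a difference of two squares, one can take a=1, b=2, c=2t+1, d=2t+2, e=2t, f=2t+3 where k=4t+2.) -/
/-!
Every `k` with `k ≢ 2 (mod 4)` is a difference of squares `x ^ 2 - y ^ 2`, and then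
`P = [[x, y], [0, 0], [y, x]]` works. For `k = 4 m + 2` one needs the middle row:
`P = [[2m+1, 2m+1], [1, -1], [2m, 2m+2]]`.
-/

/-- `Pᵀ diag(1, 1, -1) P = k diag(1, -1)` for `P = [[a, b], [c, d], [e, f]]`. -/
def DegreeRealizable (k : ℤ) : Prop :=
  ∃ a b c d e f : ℤ,
    a ^ 2 + c ^ 2 - e ^ 2 = k ∧ f ^ 2 - b ^ 2 - d ^ 2 = k ∧ a * b + c * d - e * f = 0

theorem degreeRealizable_sq_sub_sq (x y : ℤ) : DegreeRealizable (x ^ 2 - y ^ 2) :=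
  ⟨x, y, 0, 0, y, x, by ring, by ring, by ring⟩

theorem degreeRealizable_two_mul_add_one (n : ℤ) : DegreeRealizable (2 * n + 1) := by
  simpa only [show (n + 1) ^ 2 - n ^ 2 = 2 * n + 1 by ring] using
    degreeRealizable_sq_sub_sq (n + 1) n

theorem degreeRealizable_four_mul (m : ℤ) : DegreeRealizable (4 * m) := by
  simpa only [show (m + 1) ^ 2 - (m - 1) ^ 2 = 4 * m by ring] using
    degreeRealizable_sq_sub_sq (m + 1) (m - 1)

theorem degreeRealizable_four_mul_add_two (m : ℤ) : DegreeRealizable (4 * m + 2) :=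
  ⟨2 * m + 1, 2 * m + 1, 1, -1, 2 * m, 2 * m + 2, by ring, by ring, by ring⟩

theorem degreeRealizable (k : ℤ) : DegreeRealizable k := by
  obtain ⟨n, rfl | rfl⟩ := Int.even_or_odd' k
  · obtain ⟨m, rfl | rfl⟩ := Int.even_or_odd' n
    · convert degreeRealizable_four_mul m using 1; ring
    · convert degreeRealizable_four_mul_add_two m using 1; ring
  · exact degreeRealizable_two_mul_add_one n

theorem degree_cp2_two_cp2bar_to_cp2_cp2bar (k : ℤ) :
    ∃ a b c d e f : ℤ,
      a ^ 2 + c ^ 2 - e ^ 2 = k ∧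
      f ^ 2 - b ^ 2 - d ^ 2 = k ∧
      a * b + c * d - e * f = 0 :=
  degreeRealizable k
end

section
/- For every integer k there exist integers a, b, c, d, e, f satisfying a² + 2·c·e = k, b² + 2·d·f = -k, and a·b + c·f + d·e = 0. Equivalently, for every integer k there is a 3×2 integer matrix P with Pᵀ·diag(1,H)·P = k·diag(1,-1). (This is the algebraic content of: for every integer k there is a degree k map f: ℂP²♯(S²×S²) → ℂP²♯(ℂP²-bar); for even k = 2t take a=b=0, c=d=t, e=1, f=-1, and for odd k an explicit solution also exists.) -/
theorem degree_cp2_s2s2_to_cp2_cp2bar (k : ℤ) :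
    ∃ a b c d e f : ℤ,
      a ^ 2 + 2 * c * e = k ∧
      b ^ 2 + 2 * d * f = -k ∧
      a * b + c * f + d * e = 0 := by
  -- With e = 1 and f = -1 the system reads a² + 2c = k, b² - 2d = -k, ab = c - d;
  -- take a = -b = the parity of k.
  obtain ⟨t, rfl | rfl⟩ := Int.even_or_odd' k
  · exact ⟨0, 0, t, t, 1, -1, by ring, by ring, by ring⟩
  · exact ⟨1, -1, t, t + 1, 1, -1, by ring, by ring, by ring⟩
end

section
/- Let n ≥ 2 and k an integer. There exists a (2n)×2 integer matrix P with Pᵀ·(H ⊕ ⋯ ⊕ H)·P = k·I₂, where the left matrix is the block-diagonal sum of n copies of the hyperbolic matrix H, if and only if k is even. (This is the algebraic content of: there is a degree k map f: (S²×S²)^{♯n} → ℂP²♯ℂP², n ≥ 2, if and only if k is an even number.) -/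
/-!
The form `H ⊕ ⋯ ⊕ H` is even: it is symmetric with zero diagonal, so `xᵀ (H ⊕ ⋯ ⊕ H) x` is twice
the sum of its off-diagonal terms `x_{2t} x_{2t+1}`. Hence every diagonal entry of
`Pᵀ (H ⊕ ⋯ ⊕ H) P`, in particular `k`, is even. Conversely, for `k = 2m` the vectors
`e₀ + m e₁` and `e₂ + m e₃` are orthogonal of square `2m`; they live in the first two copies of
`H`, which is where `n ≥ 2` enters.
-/

open Matrix

def RepresentsForm {ι κ : Type*} [Fintype ι] (A : Matrix ι ι ℤ) (B : Matrix κ κ ℤ) : Prop :=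
  ∃ P : Matrix ι κ ℤ, Pᵀ * A * P = B

theorem RepresentsForm.trans {ι κ μ : Type*} [Fintype ι] [Fintype κ] {A : Matrix ι ι ℤ}
    {B : Matrix κ κ ℤ} {C : Matrix μ μ ℤ} (hAB : RepresentsForm A B) (hBC : RepresentsForm B C) :
    RepresentsForm A C := by
  obtain ⟨P, rfl⟩ := hAB
  obtain ⟨R, rfl⟩ := hBC
  exact ⟨P * R, by simp only [transpose_mul, Matrix.mul_assoc]⟩

theorem representsForm_submatrix {ι κ : Type*} [Fintype ι] [DecidableEq ι]
    (A : Matrix ι ι ℤ) (e : κ → ι) : RepresentsForm A (A.submatrix e e) := by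
  refine ⟨(1 : Matrix ι ι ℤ).submatrix id e, ?_⟩
  rw [transpose_submatrix, transpose_one]
  exact (congrArg (· * _) (one_submatrix_mul e (Equiv.refl ι) A)).trans
    (mul_submatrix_one (Equiv.refl ι) e _)

theorem even_sum_sum_mul_mul_of_isSymm {ι : Type*} [Fintype ι] {A : Matrix ι ι ℤ}
    (hA : A.IsSymm) (hdiag : ∀ i, Even (A i i)) (x : ι → ℤ) :
    Even (∑ i, ∑ j, x i * A i j * x j) := by
  rw [← ZMod.intCast_eq_zero_iff_even, ← Finset.sum_product']
  push_cast
  -- modulo 2 the terms at `(i, j)` and `(j, i)` cancel, and the diagonal terms vanish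
  refine Finset.sum_involution (fun p _ => p.swap) (fun p _ => ?_) (fun p _ hp => ?_)
    (fun p _ => Finset.mem_univ _) (fun p _ => Prod.swap_swap p)
  · rw [Prod.fst_swap, Prod.snd_swap, hA.apply p.1 p.2]
    linear_combination (x p.1 * A p.1 p.2 * x p.2 : ZMod 2) * CharTwo.two_eq_zero (R := ZMod 2)
  · obtain ⟨i, j⟩ := p
    intro hij
    obtain rfl : j = i := (Prod.ext_iff.1 hij).1
    apply hp
    simp [(ZMod.intCast_eq_zero_iff_even).2 (hdiag j)]

theorem RepresentsForm.even_apply_self {ι κ : Type*} [Fintype ι] {A : Matrix ι ι ℤ}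
    {B : Matrix κ κ ℤ} (hA : A.IsSymm) (hdiag : ∀ i, Even (A i i)) (h : RepresentsForm A B)
    (c : κ) : Even (B c c) := by
  obtain ⟨P, rfl⟩ := h
  convert even_sum_sum_mul_mul_of_isSymm hA hdiag (fun i => P i c) using 1
  simp only [mul_apply, transpose_apply, Finset.sum_mul]
  exact Finset.sum_comm

def hyperbolicSum (n : ℕ) : Matrix (Fin (2 * n)) (Fin (2 * n)) ℤ :=
  Matrix.of fun i j => if (i : ℕ) / 2 = (j : ℕ) / 2 ∧ (i : ℕ) ≠ (j : ℕ) then 1 else 0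

theorem hyperbolicSum_isSymm (n : ℕ) : (hyperbolicSum n).IsSymm := by
  ext i j
  simp only [hyperbolicSum, transpose_apply, of_apply, eq_comm, ne_comm]

theorem hyperbolicSum_apply_self {n : ℕ} (i : Fin (2 * n)) : hyperbolicSum n i i = 0 := by
  simp [hyperbolicSum]

theorem hyperbolicSum_submatrix_castLE {m n : ℕ} (h : 2 * m ≤ 2 * n) :
    (hyperbolicSum n).submatrix (Fin.castLE h) (Fin.castLE h) = hyperbolicSum m := by
  ext i j
  simp [hyperbolicSum]

theorem representsForm_hyperbolicSum_two_smul_one (m : ℤ) :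
    RepresentsForm (hyperbolicSum 2) ((2 * m) • (1 : Matrix (Fin 2) (Fin 2) ℤ)) := by
  refine ⟨!![1, 0; m, 0; 0, 1; 0, m], ?_⟩
  ext a b
  fin_cases a <;> fin_cases b <;> simp [mul_apply, Fin.sum_univ_four, hyperbolicSum, two_mul]

theorem degree_s2s2_n_to_cp2_two {n : ℕ} (hn : 2 ≤ n) (k : ℤ) :
    (∃ P : Matrix (Fin (2 * n)) (Fin 2) ℤ,
        Pᵀ * (Matrix.of fun i j : Fin (2 * n) =>
            if (i : ℕ) / 2 = (j : ℕ) / 2 ∧ (i : ℕ) ≠ (j : ℕ) then (1 : ℤ) else 0) * P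
          = k • (1 : Matrix (Fin 2) (Fin 2) ℤ)) ↔
      Even k := by
  change RepresentsForm (hyperbolicSum n) (k • 1) ↔ Even k
  constructor
  · intro h
    have hdiag (i : Fin (2 * n)) : Even (hyperbolicSum n i i) :=
      hyperbolicSum_apply_self i ▸ Even.zero
    simpa using h.even_apply_self (hyperbolicSum_isSymm n) hdiag 0
  · rintro ⟨m, rfl⟩
    have hle : 2 * 2 ≤ 2 * n := by omega
    refine (representsForm_submatrix (hyperbolicSum n) (Fin.castLE hle)).trans ?_
    rw [hyperbolicSum_submatrix_castLE, ← two_mul]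
    exact representsForm_hyperbolicSum_two_smul_one m
end
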